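/- arXiv:1502.02711 — 9 statements merged into one kernel-verified Lean document; each statement's English description precedes it below -/
import Mathlib

section
/- Let q be a prime power, let m ≥ n ≥ 1 and 1 ≤ k ≤ n, and let a_1, …, a_n ∈ F_{q^m} be linearly independent over F_q. Let C ⊆ (F_{q^m})^n be the F_{q^m}-linear span of the k vectors g_i = (a_1^{q^{i-1}}, …, a_n^{q^{i-1}}) for i = 1, …, k. Fix an F_q-basis of F_{q^m} and identify each c = (c_1, …, c_n) ∈ (F_{q^m})^n with the m×n matrix over F_q whose j-th column is the coordinate vector of c_j. Then the resulting set of matrices C ⊆ Mat_{m×n}(F_q) has exactly q^{km} elements, and every nonzero matrix in C has rank at least n − k + 1; that is, C is an MRD code with minimum rank distance n − k + 1. -/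
/-!
A codeword `∑ lᵢ gᵢ` is the vector of values `f(aⱼ)` of the `q`-linearised polynomial
`f = ∑ lᵢ X^{q^i}`, which is a `K`-linear map `E → E`. For `l ≠ 0` its kernel consists of
roots of a nonzero polynomial of degree at most `q^{k-1}`, so it has `K`-dimension at most `k - 1`.
Hence the `gᵢ` are `E`-independent, giving `|C| = (q^m)^k`, and by rank–nullity the `K`-span
of the `f(aⱼ)`, whose dimension is the rank of the codeword's matrix, has dimension at least
`n - (k - 1)`.
-/

open Polynomial Submodule Module

section Linearized

variable (K : Type*) {E : Type*} [Field K] [Fintype K] [Field E] {k : ℕ}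

noncomputable def linearizedPoly (l : Fin k → E) : E[X] :=
  ∑ i, C (l i) * X ^ Fintype.card K ^ (i : ℕ)

theorem coeff_linearizedPoly (l : Fin k → E) (i : Fin k) :
    (linearizedPoly K l).coeff (Fintype.card K ^ (i : ℕ)) = l i := by
  have hinj := Nat.pow_right_injective (Fintype.one_lt_card (α := K))
  simp [linearizedPoly, finsetSum_coeff, hinj.eq_iff, Fin.val_inj]

theorem linearizedPoly_ne_zero {l : Fin k → E} (hl : l ≠ 0) : linearizedPoly K l ≠ 0 := by
  obtain ⟨i, hi⟩ := Function.ne_iff.mp hl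
  exact fun h => hi (by rw [← coeff_linearizedPoly K l i, h, coeff_zero]; rfl)

theorem natDegree_linearizedPoly_lt (l : Fin k → E) :
    (linearizedPoly K l).natDegree < Fintype.card K ^ k := by
  rcases Nat.eq_zero_or_pos k with rfl | hk
  · simp [linearizedPoly]
  have hq := Fintype.one_lt_card (α := K)
  refine (natDegree_sum_le_of_forall_le _ _ fun i _ => ?_).trans_lt
    (Nat.pow_lt_pow_right hq (Nat.sub_one_lt_of_lt hk))
  exact (natDegree_C_mul_X_pow_le _ _).trans (Nat.pow_le_pow_right hq.le (by omega))

variable [Algebra K E]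

noncomputable def linearizedMap (l : Fin k → E) : E →ₗ[K] E :=
  ∑ i, l i • (FiniteField.frobeniusAlgHom K E ^ (i : ℕ)).toLinearMap

theorem linearizedMap_apply (l : Fin k → E) (x : E) :
    linearizedMap K l x = ∑ i, l i * x ^ Fintype.card K ^ (i : ℕ) := by
  simp [linearizedMap, AlgHom.coe_pow, FiniteField.coe_frobeniusAlgHom, pow_iterate]

theorem eval_linearizedPoly (l : Fin k → E) (x : E) :
    (linearizedPoly K l).eval x = linearizedMap K l x := by
  simp [linearizedPoly, linearizedMap_apply, eval_finsetSum]

theorem ker_linearizedMap_subset_rootSet {l : Fin k → E} (hl : l ≠ 0) :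
    (LinearMap.ker (linearizedMap K l) : Set E) ⊆ (linearizedPoly K l).rootSet E := fun x hx => by
  rw [mem_rootSet_of_ne (linearizedPoly_ne_zero K hl), coe_aeval_eq_eval, eval_linearizedPoly]
  exact hx

theorem finite_ker_linearizedMap {l : Fin k → E} (hl : l ≠ 0) :
    (LinearMap.ker (linearizedMap K l) : Set E).Finite :=
  (rootSet_finite _ E).subset (ker_linearizedMap_subset_rootSet K hl)

theorem finrank_ker_linearizedMap_lt {l : Fin k → E} (hl : l ≠ 0) :
    finrank K (LinearMap.ker (linearizedMap K l)) < k := by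
  have := (finite_ker_linearizedMap K hl).fintype
  have hcard : Fintype.card K ^ finrank K (LinearMap.ker (linearizedMap K l)) <
      Fintype.card K ^ k :=
    calc _ = Fintype.card (LinearMap.ker (linearizedMap K l)) := Module.card_eq_pow_finrank.symm
      _ = (LinearMap.ker (linearizedMap K l) : Set E).ncard := by
        rw [← Nat.card_coe_set_eq, Nat.card_eq_fintype_card]; rfl
      _ ≤ ((linearizedPoly K l).rootSet E).ncard :=
        Set.ncard_le_ncard (ker_linearizedMap_subset_rootSet K hl) (rootSet_finite _ E)
      _ ≤ (linearizedPoly K l).natDegree := ncard_rootSet_le _ E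
      _ < _ := natDegree_linearizedPoly_lt K l
  exact (Nat.pow_lt_pow_iff_right Fintype.one_lt_card).mp hcard

theorem linearizedMap_comp {ι : Type*} (l : Fin k → E) (a : ι → E) :
    linearizedMap K l ∘ a = ∑ i, l i • fun j => a j ^ Fintype.card K ^ (i : ℕ) := by
  ext j
  simp [linearizedMap_apply]

theorem eq_zero_of_linearizedMap_eq_zero {ι : Type*} [Fintype ι] {a : ι → E}
    (ha : LinearIndependent K a) (hk : k ≤ Fintype.card ι) {l : Fin k → E}
    (h : ∀ j, linearizedMap K l (a j) = 0) : l = 0 := by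
  by_contra hl
  have := (finite_ker_linearizedMap K hl).to_subtype
  have hle : span K (Set.range a) ≤ LinearMap.ker (linearizedMap K l) :=
    span_le.mpr (Set.range_subset_iff.mpr h)
  have hspan := Submodule.finrank_mono hle
  rw [finrank_span_eq_card ha] at hspan
  have hker := finrank_ker_linearizedMap_lt K hl
  omega

theorem linearIndependent_pow_card_pow {n : ℕ} {a : Fin n → E} (ha : LinearIndependent K a)
    (hkn : k ≤ n) :
    LinearIndependent E fun (i : Fin k) (j : Fin n) => a j ^ Fintype.card K ^ (i : ℕ) := by
  refine Fintype.linearIndependent_iff.mpr fun l hl => congrFun ?_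
  refine eq_zero_of_linearizedMap_eq_zero K ha (by simpa using hkn) fun j => ?_
  simpa [linearizedMap_apply] using congrFun hl j

end Linearized

section Rank

variable {K V W ι κ : Type*} [Field K] [AddCommGroup V] [Module K V] [AddCommGroup W] [Module K W]

theorem Module.Basis.toMatrix_injective (b : Basis ι K V) :
    Function.Injective (b.toMatrix : (κ → V) → Matrix ι κ K) := fun _ _ h =>
  funext fun j => b.ext_elem fun i => congrFun (congrFun h i) j

theorem Module.Basis.rank_toMatrix [Fintype ι] [Fintype κ] (b : Basis ι K V) (v : κ → V) :
    (b.toMatrix v).rank = finrank K (span K (Set.range v)) := by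
  have hcols :
      Set.range (b.toMatrix v).col = (b.equivFun : V →ₗ[K] ι → K) '' Set.range v := by
    rw [← Set.range_comp]; rfl
  rw [Matrix.rank_eq_finrank_span_cols, hcols, Submodule.span_image,
    LinearEquiv.finrank_map_eq]

theorem card_sub_finrank_ker_le_finrank_span_range_comp [Fintype ι] [FiniteDimensional K V]
    (f : V →ₗ[K] W) {a : ι → V} (ha : LinearIndependent K a) :
    Fintype.card ι - finrank K (LinearMap.ker f) ≤ finrank K (span K (Set.range (f ∘ a))) := by
  set S := span K (Set.range a)
  have hrn := (f.domRestrict S).finrank_range_add_finrank_ker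
  rw [LinearMap.range_domRestrict, LinearMap.ker_domRestrict, finrank_span_eq_card ha,
    ← finrank_map_subtype_eq, map_comap_subtype, Submodule.map_span, ← Set.range_comp] at hrn
  have hinf := Submodule.finrank_mono (inf_le_right : S ⊓ LinearMap.ker f ≤ _)
  omega

end Rank

theorem gabidulin_code_is_MRD_general
    {K E : Type*} [Field K] [Fintype K] [Field E] [Algebra K E]
    {m n k : ℕ} (hkn : k ≤ n)
    (b : Module.Basis (Fin m) K E) (a : Fin n → E) (ha : LinearIndependent K a) :
    letI q := Fintype.card K
    letI g : Fin k → (Fin n → E) := fun i j => (a j) ^ (q ^ (i : ℕ))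
    letI C : Submodule E (Fin n → E) := Submodule.span E (Set.range g)
    letI toMat : (Fin n → E) → Matrix (Fin m) (Fin n) K :=
      fun c => Matrix.of fun i j => b.repr (c j) i
    (toMat '' (C : Set (Fin n → E))).ncard = q ^ (k * m) ∧
      ∀ A ∈ toMat '' (C : Set (Fin n → E)), A ≠ 0 → (n - k + 1 : ℕ) ≤ A.rank := by
  change (b.toMatrix '' _).ncard = _ ∧ ∀ A ∈ b.toMatrix '' _, _
  have : FiniteDimensional K E := .of_basis b
  refine ⟨?_, ?_⟩
  · rw [Set.ncard_image_of_injective _ b.toMatrix_injective, ← Nat.card_coe_set_eq,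
      SetLike.coe_sort_coe,
      Nat.card_congr (Basis.span (linearIndependent_pow_card_pow K ha hkn)).equivFun.toEquiv,
      Nat.card_fun, Nat.card_congr b.equivFun.toEquiv, Nat.card_fun]
    simp [pow_mul, mul_comm]
  · rintro _ ⟨c, hc, rfl⟩ hA
    obtain ⟨l, rfl⟩ := (mem_span_range_iff_exists_fun E).mp hc
    have hl : l ≠ 0 := by rintro rfl; exact hA (by ext; simp [Basis.toMatrix_apply])
    rw [← linearizedMap_comp, b.rank_toMatrix]
    have hspan := card_sub_finrank_ker_le_finrank_span_range_comp (linearizedMap K l) ha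
    have hker := finrank_ker_linearizedMap_lt K hl
    rw [Fintype.card_fin] at hspan
    omega

/-- **Delsarte–Gabidulin construction.** Let `K` be a finite field with `q`
elements and `E` an extension field of `K` of degree `m ≥ n`, with a fixed
`K`-basis `b` of `E`. Given `a₁, …, aₙ ∈ E` linearly independent over `K` and
`1 ≤ k ≤ n`, let `C` be the `E`-linear span of the vectors
`gᵢ = (a₁^{q^i}, …, aₙ^{q^i})`, `0 ≤ i ≤ k-1`, and identify each `c ∈ C` with
the `m × n` matrix over `K` whose `j`-th column is the coordinate vector of
`cⱼ`.  The resulting set of matrices has exactly `q^{km}` elements and every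
nonzero matrix in it has rank at least `n - k + 1`; i.e. it is an MRD code
with minimum rank distance `n - k + 1`. -/
theorem gabidulin_code_is_MRD
    {K E : Type*} [Field K] [Fintype K] [Field E] [Algebra K E]
    {m n k : ℕ} (hnm : n ≤ m) (hn : 1 ≤ n) (hk1 : 1 ≤ k) (hkn : k ≤ n)
    (b : Module.Basis (Fin m) K E) (a : Fin n → E) (ha : LinearIndependent K a) :
    letI q := Fintype.card K
    letI g : Fin k → (Fin n → E) := fun i j => (a j) ^ (q ^ (i : ℕ))
    letI C : Submodule E (Fin n → E) := Submodule.span E (Set.range g)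
    letI toMat : (Fin n → E) → Matrix (Fin m) (Fin n) K :=
      fun c => Matrix.of fun i j => b.repr (c j) i
    (toMat '' (C : Set (Fin n → E))).ncard = q ^ (k * m) ∧
      ∀ A ∈ toMat '' (C : Set (Fin n → E)), A ≠ 0 → (n - k + 1 : ℕ) ≤ A.rank :=
  gabidulin_code_is_MRD_general hkn b a ha
end

section
/- Let C ⊆ Mat_{n×n}(F_q) be a set of q^n matrices containing the zero matrix and the identity matrix such that A − B is invertible for all distinct A, B ∈ C, and let (W, +, ∘) be the quasifield on W = F_q^n defined by w ∘ w' = w A(w'), where A(w) is the unique element of C whose first row is w. Then the set {k e_1 : k ∈ F_q} is contained in the kernel of W, i.e., for all k ∈ F_q and all w, w' ∈ W one has (k e_1) ∘ (w + w') = (k e_1) ∘ w + (k e_1) ∘ w' and (k e_1) ∘ (w ∘ w') = ((k e_1) ∘ w) ∘ w'. -/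
theorem smul_vecMul_eq_smul_of_forall_vecMul_eq {m K : Type*} [Fintype m] [CommSemiring K]
    {v : m → K} {A : (m → K) → Matrix m m K} (hA : ∀ w, Matrix.vecMul v (A w) = w)
    (k : K) (w : m → K) : Matrix.vecMul (k • v) (A w) = k • w := by
  rw [Matrix.smul_vecMul, hA]

theorem field_embeds_in_kernel_of_MRD_quasifield_general
    {K : Type*} [Field K] {n : ℕ} (hn : 0 < n)
    (C : Set (Matrix (Fin n) (Fin n) K))
    (A : (Fin n → K) → Matrix (Fin n) (Fin n) K)
    (hA : ∀ w, A w ∈ C ∧ Matrix.vecMul (Pi.single (⟨0, hn⟩ : Fin n) (1 : K)) (A w) = w) :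
    letI mul : (Fin n → K) → (Fin n → K) → (Fin n → K) :=
      fun w w' => Matrix.vecMul w (A w')
    letI e₁ : Fin n → K := Pi.single (⟨0, hn⟩ : Fin n) (1 : K)
    ∀ (k : K) (w w' : Fin n → K),
      mul (k • e₁) (w + w') = mul (k • e₁) w + mul (k • e₁) w' ∧
      mul (k • e₁) (mul w w') = mul (mul (k • e₁) w) w' := by
  intro k w w'
  have scalar_mul : ∀ x, Matrix.vecMul (k • Pi.single (⟨0, hn⟩ : Fin n) (1 : K)) (A x) = k • x :=
    smul_vecMul_eq_smul_of_forall_vecMul_eq (fun x => (hA x).2) k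
  refine ⟨?_, ?_⟩ <;> beta_reduce
  · rw [scalar_mul, scalar_mul, scalar_mul, smul_add]
  · rw [scalar_mul, scalar_mul]
    exact (Matrix.smul_vecMul k w (A w')).symm

/-- Let `C ⊆ Mat_{n×n}(F_q)` be a set of `q^n` matrices containing `0` and the
identity, with `A - B` invertible for all distinct `A, B ∈ C`, and let
`w ∘ w' := w ⬝ A w'` be the quasifield multiplication on `F_q^n`, where `A w`
is the unique element of `C` whose first row is `w`.  Then the scalar
multiples `k • e₁` of `e₁ = (1,0,…,0)` lie in the kernel of the quasifield:
`(k e₁) ∘ (w + w') = (k e₁) ∘ w + (k e₁) ∘ w'` and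
`(k e₁) ∘ (w ∘ w') = ((k e₁) ∘ w) ∘ w'` for all `k ∈ F_q`, `w, w' ∈ F_q^n`. -/
theorem field_embeds_in_kernel_of_MRD_quasifield
    {K : Type*} [Field K] [Fintype K] {n : ℕ} (hn : 0 < n)
    (C : Set (Matrix (Fin n) (Fin n) K))
    (hcard : C.ncard = Fintype.card K ^ n)
    (h0 : (0 : Matrix (Fin n) (Fin n) K) ∈ C)
    (h1 : (1 : Matrix (Fin n) (Fin n) K) ∈ C)
    (hreg : ∀ A ∈ C, ∀ B ∈ C, A ≠ B → IsUnit (A - B))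
    (A : (Fin n → K) → Matrix (Fin n) (Fin n) K)
    (hA : ∀ w, A w ∈ C ∧ Matrix.vecMul (Pi.single (⟨0, hn⟩ : Fin n) (1 : K)) (A w) = w) :
    letI mul : (Fin n → K) → (Fin n → K) → (Fin n → K) :=
      fun w w' => Matrix.vecMul w (A w')
    letI e₁ : Fin n → K := Pi.single (⟨0, hn⟩ : Fin n) (1 : K)
    ∀ (k : K) (w w' : Fin n → K),
      mul (k • e₁) (w + w') = mul (k • e₁) w + mul (k • e₁) w' ∧
      mul (k • e₁) (mul w w') = mul (mul (k • e₁) w) w' :=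
  field_embeds_in_kernel_of_MRD_quasifield_general hn C A hA
end

section
/- Let Q be a finite (right) quasifield and let K be a subfield of Ker Q, so that Q is a left K-vector space via k·x := k∘x; suppose dim_K Q = n. For each a ∈ Q let R(a) ∈ Mat_{n×n}(K) be the matrix (with respect to a fixed K-basis of Q, acting on row vectors) of the map x ↦ x∘a, so that xR(a) = x∘a for all x ∈ Q. Then the set C = {R(a) : a ∈ Q} ⊆ Mat_{n×n}(K) has exactly |K|^n elements and R(a) − R(b) is invertible for all a ≠ b in Q; that is, C is an MRD code in Mat_{n×n}(K) with minimum distance n containing the zero and identity matrices. -/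
/-!
In coordinates, right multiplication `x ↦ x ∘ a` is the matrix `R a`. Axiom (iv) with `c = 0`
says that `x ∘ a = x ∘ b` forces `x = 0` when `a ≠ b`, so `R a - R b` has trivial left kernel
and is invertible. Since `e ∘ a = a`, the matrix `R a` determines `a`, so the code has
`|Q| = |K|ⁿ` elements; `x ∘ 0 = 0` and `x ∘ e = x` give `R 0 = 0` and `R e = 1`.
-/

/-- A finite (right) quasifield structure on an additive abelian group. -/
structure IsQuasifield {Q : Type*} [AddCommGroup Q] (mul : Q → Q → Q) (e : Q) : Prop where
  zero_mul : ∀ a, mul 0 a = 0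
  mul_zero : ∀ a, mul a 0 = 0
  one_mul : ∀ a, mul e a = a
  mul_one : ∀ a, mul a e = a
  right_solve : ∀ a b, a ≠ 0 → ∃! x, mul a x = b
  left_solve : ∀ a b c, a ≠ b → ∃! x, mul x a = mul x b + c
  add_mul : ∀ a b c, mul (a + b) c = mul a c + mul b c

/-- The kernel of a quasifield: the elements that distribute from the left and
associate from the left. -/
def QKernel {Q : Type*} [AddCommGroup Q] (mul : Q → Q → Q) : Set Q :=
  {c | ∀ a b : Q, mul c (a + b) = mul c a + mul c b ∧ mul c (mul a b) = mul (mul c a) b}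

theorem IsQuasifield.eq_zero_of_mul_eq_mul {Q : Type*} [AddCommGroup Q] {mul : Q → Q → Q}
    {e : Q} (hQ : IsQuasifield mul e) {a b x : Q} (hab : a ≠ b) (hx : mul x a = mul x b) :
    x = 0 := by
  obtain ⟨y, -, hy_unique⟩ := hQ.left_solve a b 0 hab
  rw [hy_unique x (hx.trans (add_zero _).symm),
    ← hy_unique 0 (by simp only [hQ.zero_mul, add_zero])]

namespace RightMulMatrix

open Matrix

variable {Q K m : Type*} [Fintype m] {mul : Q → Q → Q} {rep : Q → m → K}
  {R : Q → Matrix m m K}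

section Semiring

variable [Semiring K] (hrep : rep.Surjective) (hR : ∀ x a, rep (mul x a) = rep x ᵥ* R a)
include hrep hR

theorem rep_zero [Zero Q] (hmul_zero : ∀ x, mul x 0 = 0) : rep 0 = 0 := by
  obtain ⟨x, hx⟩ := hrep 0
  rw [← hmul_zero x, hR, hx, zero_vecMul]

theorem eq_zero [Zero Q] (hmul_zero : ∀ x, mul x 0 = 0) : R 0 = 0 := by
  refine ext_iff_vecMul.2 fun v ↦ ?_
  obtain ⟨x, rfl⟩ := hrep v
  rw [← hR, hmul_zero, rep_zero hrep hR hmul_zero, vecMul_zero]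

theorem eq_one [DecidableEq m] {e : Q} (hmul_one : ∀ x, mul x e = x) : R e = 1 := by
  refine ext_iff_vecMul.2 fun v ↦ ?_
  obtain ⟨x, rfl⟩ := hrep v
  rw [← hR, hmul_one, vecMul_one]

end Semiring

theorem injective [Semiring K] (hrep : rep.Injective) (hR : ∀ x a, rep (mul x a) = rep x ᵥ* R a)
    {e : Q} (hone_mul : ∀ a, mul e a = a) : R.Injective := by
  intro a b hab
  rw [← hone_mul a, ← hone_mul b]
  exact hrep (by rw [hR, hR, hab])

theorem isUnit_sub [Field K] [DecidableEq m] [Zero Q] (hrep : rep.Bijective)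
    (hR : ∀ x a, rep (mul x a) = rep x ᵥ* R a) (hmul_zero : ∀ x, mul x 0 = 0) {a b : Q}
    (hab : ∀ x, mul x a = mul x b → x = 0) : IsUnit (R a - R b) := by
  have hker : ∀ v, v ᵥ* (R a - R b) = 0 → v = 0 := by
    intro v hv
    obtain ⟨x, rfl⟩ := hrep.2 v
    rw [vecMul_sub, sub_eq_zero, ← hR, ← hR] at hv
    rw [hab x (hrep.1 hv), rep_zero hrep.2 hR hmul_zero]
  refine vecMul_injective_iff_isUnit.1 fun v w hvw ↦ sub_eq_zero.1 (hker _ ?_)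
  rw [sub_vecMul]
  exact sub_eq_zero.2 hvw

end RightMulMatrix

theorem quasifield_gives_MRD_code_general
    {Q : Type*} [AddCommGroup Q] (mul : Q → Q → Q) (e : Q)
    (hQ : IsQuasifield mul e)
    {K : Type*} [Field K] [Fintype K] (ι : K → Q)
    {n : ℕ} (b : Fin n → Q) (rep : Q → Fin n → K)
    (hrep : ∀ x : Q, x = ∑ i, mul (ι (rep x i)) (b i))
    (hrep_unique : ∀ (x : Q) (c : Fin n → K), x = ∑ i, mul (ι (c i)) (b i) → c = rep x)
    (R : Q → Matrix (Fin n) (Fin n) K)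
    (hR : ∀ x a : Q, rep (mul x a) = Matrix.vecMul (rep x) (R a)) :
    (Set.range R).ncard = Fintype.card K ^ n ∧
      (∀ a b : Q, a ≠ b → IsUnit (R a - R b)) ∧
      (0 : Matrix (Fin n) (Fin n) K) ∈ Set.range R ∧
      (1 : Matrix (Fin n) (Fin n) K) ∈ Set.range R := by
  have hrep_bij : rep.Bijective :=
    ⟨fun x y hxy ↦ by rw [hrep x, hrep y, hxy],
      fun c ↦ ⟨_, (hrep_unique _ c rfl).symm⟩⟩
  refine ⟨?_, fun a b hab ↦ ?_, ⟨0, ?_⟩, ⟨e, ?_⟩⟩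
  · rw [Set.ncard_range_of_injective (RightMulMatrix.injective hrep_bij.1 hR hQ.one_mul),
      Nat.card_congr (Equiv.ofBijective rep hrep_bij), Nat.card_fun, Nat.card_eq_fintype_card,
      Nat.card_fin]
  · exact RightMulMatrix.isUnit_sub hrep_bij hR hQ.mul_zero
      fun x ↦ hQ.eq_zero_of_mul_eq_mul hab
  · exact RightMulMatrix.eq_zero hrep_bij.2 hR hQ.mul_zero
  · exact RightMulMatrix.eq_one hrep_bij.2 hR hQ.mul_one

/-- Let `Q` be a finite quasifield and `K` a subfield of `Ker Q` (realized as a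
finite field `K` embedded in `Q` via `ι`, landing in the kernel), so that `Q`
is a left `K`-vector space via `k • x := (ι k) ∘ x`; let `b` be a `K`-basis of
`Q` of size `n` with coordinate map `rep`, and let `R a` be the matrix of
`x ↦ x ∘ a` in this basis (row-vector convention: `rep (x ∘ a) = rep x ⬝ R a`).
Then `C = {R a : a ∈ Q}` has exactly `|K|^n` elements, `R a - R b` is
invertible for all `a ≠ b`, and `C` contains the zero and identity matrices;
i.e. `C` is an MRD code in `Mat_{n×n}(K)` with minimum distance `n`. -/
theorem quasifield_gives_MRD_code
    {Q : Type*} [AddCommGroup Q] [Fintype Q] (mul : Q → Q → Q) (e : Q)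
    (hQ : IsQuasifield mul e)
    {K : Type*} [Field K] [Fintype K] (ι : K → Q)
    (hι_inj : Function.Injective ι)
    (hι_add : ∀ k k', ι (k + k') = ι k + ι k')
    (hι_mul : ∀ k k', ι (k * k') = mul (ι k) (ι k'))
    (hι_one : ι 1 = e)
    (hι_ker : ∀ k, ι k ∈ QKernel mul)
    {n : ℕ} (b : Fin n → Q) (rep : Q → Fin n → K)
    (hrep : ∀ x : Q, x = ∑ i, mul (ι (rep x i)) (b i))
    (hrep_unique : ∀ (x : Q) (c : Fin n → K), x = ∑ i, mul (ι (c i)) (b i) → c = rep x)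
    (R : Q → Matrix (Fin n) (Fin n) K)
    (hR : ∀ x a : Q, rep (mul x a) = Matrix.vecMul (rep x) (R a)) :
    (Set.range R).ncard = Fintype.card K ^ n ∧
      (∀ a b : Q, a ≠ b → IsUnit (R a - R b)) ∧
      (0 : Matrix (Fin n) (Fin n) K) ∈ Set.range R ∧
      (1 : Matrix (Fin n) (Fin n) K) ∈ Set.range R :=
  quasifield_gives_MRD_code_general mul e hQ ι b rep hrep hrep_unique R hR
end

section
/- Let Q be a finite (right) quasifield. Then the kernel Ker Q is a finite field under the restrictions of + and ∘; explicitly: Ker Q contains 0 and the identity e, is closed under + and ∘, the multiplication ∘ restricted to Ker Q is associative and commutative, and every nonzero element of Ker Q has a multiplicative inverse lying in Ker Q. -/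
namespace IsQuasifield

variable {Q : Type*} [AddCommGroup Q] {mul : Q → Q → Q} {e : Q}

theorem neg_mul (hQ : IsQuasifield mul e) (a x : Q) : mul (-a) x = -mul a x := by
  have h := hQ.add_mul a (-a) x
  rw [add_neg_cancel, hQ.zero_mul] at h
  exact eq_neg_of_add_eq_zero_right h.symm

theorem mul_left_cancel (hQ : IsQuasifield mul e) {a x y : Q} (ha : a ≠ 0)
    (h : mul a x = mul a y) : x = y :=
  (hQ.right_solve a (mul a y) ha).unique h rfl

theorem eq_zero_of_one_eq_zero (hQ : IsQuasifield mul e) (he : e = 0) (a : Q) : a = 0 := by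
  rw [← hQ.one_mul a, he, hQ.zero_mul]

theorem zero_mem_qKernel (hQ : IsQuasifield mul e) : (0 : Q) ∈ QKernel mul := fun a b => by
  simp only [hQ.zero_mul, add_zero, and_self]

theorem one_mem_qKernel (hQ : IsQuasifield mul e) : e ∈ QKernel mul := fun a b => by
  simp only [hQ.one_mul, and_self]

theorem add_mem_qKernel (hQ : IsQuasifield mul e) {a b : Q} (ha : a ∈ QKernel mul)
    (hb : b ∈ QKernel mul) : a + b ∈ QKernel mul := fun x y => by
  refine ⟨?_, ?_⟩
  · rw [hQ.add_mul, hQ.add_mul, hQ.add_mul, (ha x y).1, (hb x y).1]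
    abel
  · rw [hQ.add_mul, (ha x y).2, (hb x y).2, hQ.add_mul, hQ.add_mul]

theorem neg_mem_qKernel (hQ : IsQuasifield mul e) {a : Q} (ha : a ∈ QKernel mul) :
    -a ∈ QKernel mul := fun x y => by
  simp only [hQ.neg_mul, (ha x y).1, (ha x y).2, neg_add, and_true]

theorem mul_mem_qKernel {a b : Q} (ha : a ∈ QKernel mul) (hb : b ∈ QKernel mul) :
    mul a b ∈ QKernel mul := fun x y => by
  refine ⟨?_, ?_⟩
  · rw [← (ha b x).2, ← (ha b y).2, ← (ha b (x + y)).2, (hb x y).1, (ha _ _).1]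
  · rw [← (ha b (mul x y)).2, (hb x y).2, (ha _ _).2, (ha b x).2]

def kernelAddSubgroup (hQ : IsQuasifield mul e) : AddSubgroup Q where
  carrier := QKernel mul
  zero_mem' := hQ.zero_mem_qKernel
  add_mem' := hQ.add_mem_qKernel
  neg_mem' := hQ.neg_mem_qKernel

abbrev kernelRing (hQ : IsQuasifield mul e) : Ring (QKernel mul) :=
  { hQ.kernelAddSubgroup.toAddCommGroup with
    one := ⟨e, hQ.one_mem_qKernel⟩
    mul := fun a b => ⟨mul a b, mul_mem_qKernel a.2 b.2⟩
    mul_assoc := fun a b c => Subtype.ext (a.2 b c).2.symm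
    one_mul := fun a => Subtype.ext (hQ.one_mul a)
    mul_one := fun a => Subtype.ext (hQ.mul_one a)
    left_distrib := fun a b c => Subtype.ext (a.2 b c).1
    right_distrib := fun a b c => Subtype.ext (hQ.add_mul a b c)
    zero_mul := fun a => Subtype.ext (hQ.zero_mul a)
    mul_zero := fun a => Subtype.ext (hQ.mul_zero a) }

theorem kernel_isDomain (hQ : IsQuasifield mul e) (he : e ≠ 0) :
    letI := hQ.kernelRing
    IsDomain (QKernel mul) := by
  let := hQ.kernelRing
  have : Nontrivial (QKernel mul) := ⟨⟨1, 0, fun h => he (congrArg Subtype.val h)⟩⟩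
  have : NoZeroDivisors (QKernel mul) := by
    refine ⟨fun {a b} hab => or_iff_not_imp_left.2 fun ha => Subtype.ext ?_⟩
    have ha : a.1 ≠ 0 := fun h => ha (Subtype.ext h)
    have hab : mul a.1 b.1 = mul a.1 0 := by rw [hQ.mul_zero]; exact congrArg Subtype.val hab
    exact hQ.mul_left_cancel ha hab
  exact NoZeroDivisors.to_isDomain _

theorem kernel_isField [Finite Q] (hQ : IsQuasifield mul e) (he : e ≠ 0) :
    letI := hQ.kernelRing
    IsField (QKernel mul) :=
  letI := hQ.kernelRing
  have := hQ.kernel_isDomain he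
  Finite.isDomain_to_isField _

theorem mul_comm_of_mem_qKernel [Finite Q] (hQ : IsQuasifield mul e) {a b : Q}
    (ha : a ∈ QKernel mul) (hb : b ∈ QKernel mul) : mul a b = mul b a := by
  by_cases he : e = 0
  · rw [hQ.eq_zero_of_one_eq_zero he a, hQ.eq_zero_of_one_eq_zero he b]
  · let := hQ.kernelRing
    exact congrArg Subtype.val ((hQ.kernel_isField he).mul_comm ⟨a, ha⟩ ⟨b, hb⟩)

theorem exists_inv_mem_qKernel [Finite Q] (hQ : IsQuasifield mul e) {a : Q}
    (ha : a ∈ QKernel mul) (ha0 : a ≠ 0) : ∃ b ∈ QKernel mul, mul a b = e := by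
  have he : e ≠ 0 := fun he => ha0 (hQ.eq_zero_of_one_eq_zero he a)
  let := hQ.kernelRing
  obtain ⟨b, hb⟩ := (hQ.kernel_isField he).mul_inv_cancel
    (a := ⟨a, ha⟩) fun h => ha0 (congrArg Subtype.val h)
  exact ⟨b, b.2, congrArg Subtype.val hb⟩

end IsQuasifield

/-- The kernel of a finite quasifield `Q` is a finite field under the
restrictions of `+` and `∘`: it contains `0` and the identity `e`, is closed
under `+` and `∘`, the multiplication restricted to it is associative and
commutative, and every nonzero element of the kernel has a multiplicative
inverse lying in the kernel. -/
theorem kernel_of_finite_quasifield_is_field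
    {Q : Type*} [AddCommGroup Q] [Fintype Q] (mul : Q → Q → Q) (e : Q)
    (hQ : IsQuasifield mul e) :
    (0 : Q) ∈ QKernel mul ∧
    e ∈ QKernel mul ∧
    (∀ a ∈ QKernel mul, ∀ b ∈ QKernel mul, a + b ∈ QKernel mul) ∧
    (∀ a ∈ QKernel mul, ∀ b ∈ QKernel mul, mul a b ∈ QKernel mul) ∧
    (∀ a ∈ QKernel mul, ∀ b ∈ QKernel mul, ∀ c ∈ QKernel mul,
      mul (mul a b) c = mul a (mul b c)) ∧
    (∀ a ∈ QKernel mul, ∀ b ∈ QKernel mul, mul a b = mul b a) ∧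
    (∀ a ∈ QKernel mul, a ≠ 0 → ∃ b ∈ QKernel mul, mul a b = e) :=
  ⟨hQ.zero_mem_qKernel, hQ.one_mem_qKernel,
    fun _ ha _ hb => hQ.add_mem_qKernel ha hb,
    fun _ ha _ hb => IsQuasifield.mul_mem_qKernel ha hb,
    fun _ ha b _ c _ => (ha b c).2.symm,
    fun _ ha _ hb => hQ.mul_comm_of_mem_qKernel ha hb,
    fun _ ha ha0 => hQ.exists_inv_mem_qKernel ha ha0⟩
end

section
/- Let Q be a finite (right) quasifield with identity e, let K be a subfield of Ker Q with dim_K Q = n, and for a ∈ Q let R(a) ∈ Mat_{n×n}(K) be the matrix of the map x ↦ x∘a with respect to a fixed K-basis of Q. If the set C = {R(a) : a ∈ Q} is closed under matrix addition, then R(a) + R(b) = R(a + b) for all a, b ∈ Q, and Q satisfies the left distributive law x∘(a + b) = x∘a + x∘b for all x, a, b ∈ Q; that is, Q is a semifield. -/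
/-!
Coordinates with respect to a `K`-basis turn right multiplication by `a` into the matrix `R a`, and
coordinates are additive by the right distributive law. If `R a + R c = R d`, then
`x ∘ a + x ∘ c = x ∘ d` for every `x`; taking `x = e` forces `d = a + c`. So `a ↦ R a` is additive,
and reading `R (a + c) = R a + R c` through coordinates is the left distributive law.
-/

section Coordinates

variable {Q K : Type*} [AddCommMonoid Q] {n : ℕ}
  {mul : Q → Q → Q} {ι : K → Q} {b : Fin n → Q} {rep : Q → Fin n → K}

theorem coords_injective (hrep : ∀ x : Q, x = ∑ i, mul (ι (rep x i)) (b i)) :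
    Function.Injective rep := by
  intro x y h
  rw [hrep x, hrep y, h]

theorem coords_add [Add K] (hadd_mul : ∀ a b c, mul (a + b) c = mul a c + mul b c)
    (hι_add : ∀ k k', ι (k + k') = ι k + ι k')
    (hrep : ∀ x : Q, x = ∑ i, mul (ι (rep x i)) (b i))
    (hrep_unique : ∀ (x : Q) (c : Fin n → K), x = ∑ i, mul (ι (c i)) (b i) → c = rep x)
    (x y : Q) : rep (x + y) = rep x + rep y := by
  refine (hrep_unique _ _ ?_).symm
  calc x + y = ∑ i, mul (ι (rep x i)) (b i) + ∑ i, mul (ι (rep y i)) (b i) := by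
        rw [← hrep, ← hrep]
    _ = ∑ i, mul (ι ((rep x + rep y) i)) (b i) := by
        rw [← Finset.sum_add_distrib]
        simp only [Pi.add_apply, hι_add, hadd_mul]

end Coordinates

section RightMultiplicationMatrix

variable {Q K : Type*} [AddCommMonoid Q] [NonUnitalNonAssocSemiring K] {n : ℕ}
  {mul : Q → Q → Q} {rep : Q → Fin n → K} {R : Q → Matrix (Fin n) (Fin n) K}

theorem mul_eq_add_of_matrix_add_eq (hinj : Function.Injective rep)
    (hrep_add : ∀ x y, rep (x + y) = rep x + rep y)
    (hR : ∀ x a : Q, rep (mul x a) = Matrix.vecMul (rep x) (R a))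
    {a c d : Q} (h : R a + R c = R d) (x : Q) : mul x d = mul x a + mul x c :=
  hinj <| by rw [hrep_add, hR, hR, hR, ← h, Matrix.vecMul_add]

theorem eq_add_of_matrix_add_eq {e : Q} (hone_mul : ∀ a, mul e a = a)
    (hinj : Function.Injective rep) (hrep_add : ∀ x y, rep (x + y) = rep x + rep y)
    (hR : ∀ x a : Q, rep (mul x a) = Matrix.vecMul (rep x) (R a))
    {a c d : Q} (h : R a + R c = R d) : d = a + c := by
  simpa only [hone_mul] using mul_eq_add_of_matrix_add_eq hinj hrep_add hR h e

end RightMultiplicationMatrix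

theorem additively_closed_MRD_code_gives_semifield_general
    {Q : Type*} [AddCommGroup Q] (mul : Q → Q → Q) (e : Q)
    (hQ : IsQuasifield mul e)
    {K : Type*} [Field K] (ι : K → Q)
    (hι_add : ∀ k k', ι (k + k') = ι k + ι k')
    {n : ℕ} (b : Fin n → Q) (rep : Q → Fin n → K)
    (hrep : ∀ x : Q, x = ∑ i, mul (ι (rep x i)) (b i))
    (hrep_unique : ∀ (x : Q) (c : Fin n → K), x = ∑ i, mul (ι (c i)) (b i) → c = rep x)
    (R : Q → Matrix (Fin n) (Fin n) K)
    (hR : ∀ x a : Q, rep (mul x a) = Matrix.vecMul (rep x) (R a))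
    (hclosed : ∀ A ∈ Set.range R, ∀ B ∈ Set.range R, A + B ∈ Set.range R) :
    (∀ a b : Q, R a + R b = R (a + b)) ∧
      ∀ x a b : Q, mul x (a + b) = mul x a + mul x b := by
  have hinj := coords_injective hrep
  have hrep_add := coords_add hQ.add_mul hι_add hrep hrep_unique
  have hR_add : ∀ a c, R a + R c = R (a + c) := by
    intro a c
    obtain ⟨d, hd⟩ := hclosed (R a) ⟨a, rfl⟩ (R c) ⟨c, rfl⟩
    rw [← hd, eq_add_of_matrix_add_eq hQ.one_mul hinj hrep_add hR hd.symm]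
  exact ⟨hR_add, fun x a c => mul_eq_add_of_matrix_add_eq hinj hrep_add hR (hR_add a c) x⟩

/-- Let `Q` be a finite quasifield with identity `e`, `K` a subfield of
`Ker Q` (a finite field embedded in `Q` via `ι`, landing in the kernel) with
`dim_K Q = n`, and for `a ∈ Q` let `R a` be the matrix of `x ↦ x ∘ a` with
respect to a fixed `K`-basis of `Q` (row-vector convention).  If the code
`C = {R a : a ∈ Q}` is closed under matrix addition, then
`R a + R b = R (a + b)` for all `a, b`, and `Q` satisfies the left
distributive law, i.e. `Q` is a semifield. -/
theorem additively_closed_MRD_code_gives_semifield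
    {Q : Type*} [AddCommGroup Q] [Fintype Q] (mul : Q → Q → Q) (e : Q)
    (hQ : IsQuasifield mul e)
    {K : Type*} [Field K] [Fintype K] (ι : K → Q)
    (hι_inj : Function.Injective ι)
    (hι_add : ∀ k k', ι (k + k') = ι k + ι k')
    (hι_mul : ∀ k k', ι (k * k') = mul (ι k) (ι k'))
    (hι_one : ι 1 = e)
    (hι_ker : ∀ k, ι k ∈ QKernel mul)
    {n : ℕ} (b : Fin n → Q) (rep : Q → Fin n → K)
    (hrep : ∀ x : Q, x = ∑ i, mul (ι (rep x i)) (b i))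
    (hrep_unique : ∀ (x : Q) (c : Fin n → K), x = ∑ i, mul (ι (c i)) (b i) → c = rep x)
    (R : Q → Matrix (Fin n) (Fin n) K)
    (hR : ∀ x a : Q, rep (mul x a) = Matrix.vecMul (rep x) (R a))
    (hclosed : ∀ A ∈ Set.range R, ∀ B ∈ Set.range R, A + B ∈ Set.range R) :
    (∀ a b : Q, R a + R b = R (a + b)) ∧
      ∀ x a b : Q, mul x (a + b) = mul x a + mul x b :=
  additively_closed_MRD_code_gives_semifield_general mul e hQ ι hι_add b rep hrep hrep_unique R hR
    hclosed
end

section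
/- Let S be a finite semifield, let K be a subfield of Ker S with dim_K S = n, and for a ∈ S let R(a) ∈ Mat_{n×n}(K) be the matrix of the map x ↦ x∘a with respect to a fixed K-basis of S whose first vector is the identity e. Then the code C = {R(a) : a ∈ S} is a K-linear subspace of Mat_{n×n}(K) (i.e. closed under addition and under multiplication by scalars from K) if and only if S is a division algebra over K, i.e. (k∘x)∘a = k∘(x∘a) = x∘(k∘a) for all k ∈ K and all x, a ∈ S. -/
/-- A (finite) semifield is a quasifield that is also left distributive. -/
structure IsSemifield {Q : Type*} [AddCommGroup Q] (mul : Q → Q → Q) (e : Q)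
    extends IsQuasifield mul e : Prop where
  mul_add : ∀ a b c, mul a (b + c) = mul a b + mul a c

/-!
Taking coordinates turns `x ↦ x ∘ a` into `R a`. Since `K` lies in the kernel, coordinates
are `K`-linear, so `R a' = k • R a` says exactly that `y ∘ a' = k ∘ (y ∘ a)` for all `y`;
evaluating at `y = e` forces `a' = k ∘ a`, and then `x ∘ (k ∘ a) = k ∘ (x ∘ a)` for all `x`.
Conversely that identity gives `R (k ∘ a) = k • R a`, and left distributivity gives
`R (a + a') = R a + R a'`. The other identity `(k ∘ x) ∘ a = k ∘ (x ∘ a)` is the kernel axiom.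
-/

section Coordinates

variable {S : Type*} [AddCommGroup S] {mul : S → S → S} {K : Type*} {ι : K → S}
  {m : Type*} [Fintype m] {b : m → S} {rep : S → m → K}

theorem mul_sum_of_mem_QKernel {c : S} (hc : c ∈ QKernel mul) {α : Type*} (s : Finset α)
    (f : α → S) : mul c (∑ i ∈ s, f i) = ∑ i ∈ s, mul c (f i) :=
  map_sum (AddMonoidHom.mk' (mul c) fun a b => (hc a b).1) f s

theorem rep_injective (hrep : ∀ x, x = ∑ i, mul (ι (rep x i)) (b i)) :
    Function.Injective rep :=
  fun x y h => by rw [hrep x, hrep y, h]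

theorem rep_surjective
    (hrep_unique : ∀ x c, x = ∑ i, mul (ι (c i)) (b i) → c = rep x) :
    Function.Surjective rep :=
  fun c => ⟨_, (hrep_unique _ c rfl).symm⟩

theorem rep_add [Add K] (hadd_mul : ∀ x y z, mul (x + y) z = mul x z + mul y z)
    (hι_add : ∀ k k', ι (k + k') = ι k + ι k')
    (hrep : ∀ x, x = ∑ i, mul (ι (rep x i)) (b i))
    (hrep_unique : ∀ x c, x = ∑ i, mul (ι (c i)) (b i) → c = rep x) (x y : S) :
    rep (x + y) = rep x + rep y := by
  refine (hrep_unique _ _ ?_).symm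
  conv_lhs => rw [hrep x, hrep y]
  simp only [← Finset.sum_add_distrib, ← hadd_mul, ← hι_add, Pi.add_apply]

theorem rep_kernel_mul [Mul K] (hι_mul : ∀ k k', ι (k * k') = mul (ι k) (ι k'))
    (hι_ker : ∀ k, ι k ∈ QKernel mul)
    (hrep : ∀ x, x = ∑ i, mul (ι (rep x i)) (b i))
    (hrep_unique : ∀ x c, x = ∑ i, mul (ι (c i)) (b i) → c = rep x) (k : K) (x : S) :
    rep (mul (ι k) x) = k • rep x := by
  refine (hrep_unique _ _ ?_).symm
  conv_lhs => rw [hrep x]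
  rw [mul_sum_of_mem_QKernel (hι_ker k)]
  refine Finset.sum_congr rfl fun i _ => ?_
  rw [(hι_ker k _ _).2, ← hι_mul]
  rfl

end Coordinates

section RightMulMatrix

open Matrix

variable {S : Type*} {mul : S → S → S} {K : Type*} [CommSemiring K] {m : Type*} [Fintype m]
  {rep : S → m → K} {R : S → Matrix m m K}

theorem rightMul_matrix_eq_smul_iff {ι : K → S} (hrep_surj : Function.Surjective rep)
    (hrep_inj : Function.Injective rep) (hrep_smul : ∀ k x, rep (mul (ι k) x) = k • rep x)
    (hR : ∀ x a, rep (mul x a) = rep x ᵥ* R a) (k : K) (a a' : S) :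
    R a' = k • R a ↔ ∀ x, mul x a' = mul (ι k) (mul x a) := by
  rw [ext_iff_vecMul, hrep_surj.forall]
  refine forall_congr' fun x => ?_
  rw [vecMul_smul, ← hR, ← hR, ← hrep_smul, hrep_inj.eq_iff]

theorem rightMul_matrix_add [AddCommGroup S] (hrep_surj : Function.Surjective rep)
    (hrep_add : ∀ x y, rep (x + y) = rep x + rep y)
    (hmul_add : ∀ x a a', mul x (a + a') = mul x a + mul x a')
    (hR : ∀ x a, rep (mul x a) = rep x ᵥ* R a) (a a' : S) :
    R (a + a') = R a + R a' := by
  rw [ext_iff_vecMul, hrep_surj.forall]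
  intro x
  rw [vecMul_add, ← hR, ← hR, ← hR, hmul_add, hrep_add]

end RightMulMatrix

theorem linear_MRD_code_iff_division_algebra_general
    {S : Type*} [AddCommGroup S] (mul : S → S → S) (e : S)
    (hS : IsSemifield mul e)
    {K : Type*} [Field K] (ι : K → S)
    (hι_add : ∀ k k', ι (k + k') = ι k + ι k')
    (hι_mul : ∀ k k', ι (k * k') = mul (ι k) (ι k'))
    (hι_ker : ∀ k, ι k ∈ QKernel mul)
    {n : ℕ} (b : Fin n → S) (rep : S → Fin n → K)
    (hrep : ∀ x : S, x = ∑ i, mul (ι (rep x i)) (b i))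
    (hrep_unique : ∀ (x : S) (c : Fin n → K), x = ∑ i, mul (ι (c i)) (b i) → c = rep x)
    (R : S → Matrix (Fin n) (Fin n) K)
    (hR : ∀ x a : S, rep (mul x a) = Matrix.vecMul (rep x) (R a)) :
    ((∀ A ∈ Set.range R, ∀ B ∈ Set.range R, A + B ∈ Set.range R) ∧
        (∀ (k : K), ∀ A ∈ Set.range R, k • A ∈ Set.range R)) ↔
      (∀ (k : K) (x a : S),
        mul (mul (ι k) x) a = mul (ι k) (mul x a) ∧
        mul (ι k) (mul x a) = mul x (mul (ι k) a)) := by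
  have hrep_surj := rep_surjective hrep_unique
  have hR_smul := rightMul_matrix_eq_smul_iff hrep_surj (rep_injective hrep)
    (rep_kernel_mul hι_mul hι_ker hrep hrep_unique) hR
  constructor
  · rintro ⟨-, hsmul_closed⟩ k x a
    obtain ⟨a', ha'⟩ := hsmul_closed k (R a) ⟨a, rfl⟩
    have hmul_a' := (hR_smul k a a').1 ha'
    have ha'_eq : a' = mul (ι k) a := by simpa only [hS.one_mul] using hmul_a' e
    exact ⟨((hι_ker k x a).2).symm, ha'_eq ▸ (hmul_a' x).symm⟩
  · intro hdiv
    refine ⟨?_, ?_⟩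
    · rintro _ ⟨a, rfl⟩ _ ⟨a', rfl⟩
      exact ⟨a + a', rightMul_matrix_add hrep_surj
        (rep_add hS.add_mul hι_add hrep hrep_unique) hS.mul_add hR a a'⟩
    · rintro k _ ⟨a, rfl⟩
      exact ⟨mul (ι k) a, (hR_smul k a _).2 fun x => (hdiv k x a).2.symm⟩

/-- Let `S` be a finite semifield, `K` a subfield of `Ker S` (a finite field
embedded in `S` via `ι`, landing in the kernel) with `dim_K S = n`, and for
`a ∈ S` let `R a` be the matrix of `x ↦ x ∘ a` with respect to a fixed
`K`-basis of `S` whose first vector is the identity `e`.  Then the code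
`C = {R a : a ∈ S}` is a `K`-linear subspace of `Mat_{n×n}(K)` (closed under
addition and scalar multiplication by `K`) if and only if `S` is a division
algebra over `K`, i.e. `(k ∘ x) ∘ a = k ∘ (x ∘ a) = x ∘ (k ∘ a)` for all
`k ∈ K` and `x, a ∈ S`. -/
theorem linear_MRD_code_iff_division_algebra
    {S : Type*} [AddCommGroup S] [Fintype S] (mul : S → S → S) (e : S)
    (hS : IsSemifield mul e)
    {K : Type*} [Field K] [Fintype K] (ι : K → S)
    (hι_inj : Function.Injective ι)
    (hι_add : ∀ k k', ι (k + k') = ι k + ι k')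
    (hι_mul : ∀ k k', ι (k * k') = mul (ι k) (ι k'))
    (hι_one : ι 1 = e)
    (hι_ker : ∀ k, ι k ∈ QKernel mul)
    {n : ℕ} (hn : 0 < n) (b : Fin n → S) (rep : S → Fin n → K)
    (hb0 : b ⟨0, hn⟩ = e)
    (hrep : ∀ x : S, x = ∑ i, mul (ι (rep x i)) (b i))
    (hrep_unique : ∀ (x : S) (c : Fin n → K), x = ∑ i, mul (ι (c i)) (b i) → c = rep x)
    (R : S → Matrix (Fin n) (Fin n) K)
    (hR : ∀ x a : S, rep (mul x a) = Matrix.vecMul (rep x) (R a)) :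
    ((∀ A ∈ Set.range R, ∀ B ∈ Set.range R, A + B ∈ Set.range R) ∧
        (∀ (k : K), ∀ A ∈ Set.range R, k • A ∈ Set.range R)) ↔
      (∀ (k : K) (x a : S),
        mul (mul (ι k) x) a = mul (ι k) (mul x a) ∧
        mul (ι k) (mul x a) = mul x (mul (ι k) a)) :=
  linear_MRD_code_iff_division_algebra_general mul e hS ι hι_add hι_mul hι_ker b rep hrep
    hrep_unique R hR
end

section
/- Let K = F_q and let C = {A(w) : w ∈ K^n} and C' = {A'(w) : w ∈ K^n} be K-linear MRD codes in Mat_{n×n}(K) with minimum distance n, where A(w) (resp. A'(w)) is the unique element of C (resp. C') with first row w, and let D and D' be the corresponding division algebras on K^n with multiplications w_1 ∘ w_2 = w_1 A(w_2) and w_1 ∘' w_2 = w_1 A'(w_2). Suppose there exist X, Y ∈ GL(n,K) such that {X A(w) Y : w ∈ K^n} = C' or {X A(w)^t Y : w ∈ K^n} = C'. Then D' is isotopic over K to D or to the transpose algebra D^t: there exist K-linear bijections F, G, H : K^n → K^n such that wF ∘' w'G = (w ∘ w')H for all w, w' (with ∘ replaced by the multiplication w_1 ∘^t w_2 = w_1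 A(w_2)^t of D^t in the second case). -/
/-!
If `X (A w) Y` (or `X (A w)ᵀ Y`) always lies in the code `{A' w}`, reading off first rows turns
`w ↦ X (A w) Y` into a linear bijection `G` of `K^n` with `A' (G w) = X (A w) Y`, since a
codeword of `C'` is determined by its first row. Then `(w₁ X⁻¹) ∘' (G w₂) = w₁ (A w₂) Y`,
so `F = (· X⁻¹)`, `G` and `H = (· Y)` form an isotopy.
-/

open Matrix

theorem isLinearMap_of_map_smul_add {R M N : Type*} [Semiring R] [AddCommMonoid M]
    [AddCommGroup N] [Module R M] [Module R N] (f : M → N)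
    (hf : ∀ (k : R) (x y : M), f (k • x + y) = k • f x + f y) : IsLinearMap R f := by
  have hf0 : f 0 = 0 := by simpa using hf 1 0 0
  exact ⟨fun x y => by simpa using hf 1 x y, fun k x => by simpa [hf0] using hf k x 0⟩

section

variable {K ι : Type*} [Field K] [Fintype ι] [DecidableEq ι]

def unitVecMulEquiv (u : (Matrix ι ι K)ˣ) : (ι → K) ≃ₗ[K] (ι → K) :=
  LinearEquiv.ofLinearMap (vecMulLinear (u : Matrix ι ι K)) (vecMulLinear ↑u⁻¹)
    (LinearMap.ext fun w => by simp [vecMul_vecMul])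
    (LinearMap.ext fun w => by simp [vecMul_vecMul])

theorem unitVecMulEquiv_apply (u : (Matrix ι ι K)ˣ) (w : ι → K) :
    unitVecMulEquiv u w = vecMul w (u : Matrix ι ι K) := rfl

end

theorem exists_linearEquiv_apply_eq_of_range_subset {K ι κ : Type*} [Field K] [Fintype κ]
    (i₀ : ι) (A' : (κ → K) → Matrix ι κ K) (hrow' : ∀ w, A' w i₀ = w)
    (Φ : (κ → K) →ₗ[K] Matrix ι κ K) (hΦ : Function.Injective Φ)
    (hrange : Set.range Φ ⊆ Set.range A') :
    ∃ G : (κ → K) ≃ₗ[K] (κ → K), ∀ w, A' (G w) = Φ w := by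
  let row : (κ → K) →ₗ[K] (κ → K) := LinearMap.proj i₀ ∘ₗ Φ
  have hA'_row : ∀ w, A' (row w) = Φ w := fun w => by
    obtain ⟨v, hv⟩ := hrange (Set.mem_range_self w)
    change A' (Φ w i₀) = Φ w
    rw [← hv, hrow']
  have hrow_inj : Function.Injective row := fun w w' h =>
    hΦ (by rw [← hA'_row w, ← hA'_row w', h])
  exact ⟨LinearEquiv.ofInjectiveEndo row hrow_inj, hA'_row⟩

theorem exists_isotopy_of_mul_mul_mem_range {K ι : Type*} [Field K] [Fintype ι] [DecidableEq ι]
    (i₀ : ι) (A' : (ι → K) → Matrix ι ι K) (hrow' : ∀ w, A' w i₀ = w)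
    (B : (ι → K) →ₗ[K] Matrix ι ι K) (hB : Function.Injective B) (U V : (Matrix ι ι K)ˣ)
    (hmem : ∀ w, (U : Matrix ι ι K) * B w * V ∈ Set.range A') :
    ∃ F G H : (ι → K) ≃ₗ[K] (ι → K),
      ∀ w₁ w₂, vecMul (F w₁) (A' (G w₂)) = H (vecMul w₁ (B w₂)) := by
  let Φ := (LinearMap.mulLeft K (U : Matrix ι ι K) ∘ₗ
    LinearMap.mulRight K (V : Matrix ι ι K)) ∘ₗ B
  have hΦ : Function.Injective Φ :=
    (U.isUnit.mul_right_injective.comp V.isUnit.mul_left_injective).comp hB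
  obtain ⟨G, hG⟩ := exists_linearEquiv_apply_eq_of_range_subset i₀ A' hrow' Φ hΦ
    (Set.range_subset_iff.mpr fun w => by simpa [Φ, mul_assoc] using hmem w)
  refine ⟨unitVecMulEquiv U⁻¹, G, unitVecMulEquiv V, fun w₁ w₂ => ?_⟩
  simp [hG, Φ, unitVecMulEquiv_apply, vecMul_vecMul, ← mul_assoc]

theorem equivalent_MRD_codes_give_isotopic_division_algebras_general
    {K : Type*} [Field K] {n : ℕ} (hn : 0 < n)
    (A A' : (Fin n → K) → Matrix (Fin n) (Fin n) K)
    (hrow : ∀ w, A w ⟨0, hn⟩ = w)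
    (hrow' : ∀ w, A' w ⟨0, hn⟩ = w)
    (hlin : ∀ (k : K) (w w'), A (k • w + w') = k • A w + A w')
    (X Y : Matrix (Fin n) (Fin n) K) (hX : IsUnit X) (hY : IsUnit Y)
    (hequiv : (fun M => X * M * Y) '' Set.range A = Set.range A' ∨
              (fun M => X * M.transpose * Y) '' Set.range A = Set.range A') :
    ∃ F G H : (Fin n → K) ≃ₗ[K] (Fin n → K),
      (∀ w₁ w₂ : Fin n → K,
          Matrix.vecMul (F w₁) (A' (G w₂)) = H (Matrix.vecMul w₁ (A w₂))) ∨
      (∀ w₁ w₂ : Fin n → K,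
          Matrix.vecMul (F w₁) (A' (G w₂)) = H (Matrix.vecMul w₁ (A w₂).transpose)) := by
  obtain ⟨U, rfl⟩ := hX
  obtain ⟨V, rfl⟩ := hY
  let Aₗ := IsLinearMap.mk' A (isLinearMap_of_map_smul_add A hlin)
  have hA : Function.Injective Aₗ := fun w w' h => by
    simpa [Aₗ, hrow] using congrArg (· ⟨0, hn⟩) h
  rcases hequiv with h | h
  · obtain ⟨F, G, H, hFGH⟩ := exists_isotopy_of_mul_mul_mem_range _ A' hrow' Aₗ hA U V
      fun w => h ▸ Set.mem_image_of_mem _ (Set.mem_range_self w)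
    exact ⟨F, G, H, .inl hFGH⟩
  · obtain ⟨F, G, H, hFGH⟩ := exists_isotopy_of_mul_mul_mem_range _ A' hrow'
      ((transposeLinearEquiv _ _ K K).toLinearMap ∘ₗ Aₗ) (transpose_injective.comp hA) U V
      fun w => h ▸ Set.mem_image_of_mem _ (Set.mem_range_self w)
    exact ⟨F, G, H, .inr hFGH⟩

/-- Let `C = {A w}` and `C' = {A' w}` be `K`-linear MRD codes in
`Mat_{n×n}(K)` with minimum distance `n` over a finite field `K`, where `A w`
(resp. `A' w`) is the unique element of the code with first row `w`, with
corresponding division algebras on `K^n` given by `w₁ ∘ w₂ = w₁ ⬝ A w₂` and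
`w₁ ∘' w₂ = w₁ ⬝ A' w₂`.  If there are `X, Y ∈ GL(n,K)` with
`{X (A w) Y} = C'` or `{X (A w)ᵀ Y} = C'`, then the division algebra of `C'`
is isotopic over `K` to that of `C` or to its transpose: there are `K`-linear
bijections `F, G, H` of `K^n` with `wF ∘' w'G = (w ∘ w')H` for all `w, w'`
(with `∘` replaced by `w₁ ∘ᵗ w₂ = w₁ ⬝ (A w₂)ᵀ` in the transpose case). -/
theorem equivalent_MRD_codes_give_isotopic_division_algebras
    {K : Type*} [Field K] [Fintype K] {n : ℕ} (hn : 0 < n)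
    (A A' : (Fin n → K) → Matrix (Fin n) (Fin n) K)
    (hrow : ∀ w, A w ⟨0, hn⟩ = w)
    (hrow' : ∀ w, A' w ⟨0, hn⟩ = w)
    (hlin : ∀ (k : K) (w w'), A (k • w + w') = k • A w + A w')
    (hlin' : ∀ (k : K) (w w'), A' (k • w + w') = k • A' w + A' w')
    (hid : A (Pi.single (⟨0, hn⟩ : Fin n) (1 : K)) = 1)
    (hid' : A' (Pi.single (⟨0, hn⟩ : Fin n) (1 : K)) = 1)
    (hunit : ∀ w w', w ≠ w' → IsUnit (A w - A w'))
    (hunit' : ∀ w w', w ≠ w' → IsUnit (A' w - A' w'))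
    (X Y : Matrix (Fin n) (Fin n) K) (hX : IsUnit X) (hY : IsUnit Y)
    (hequiv : (fun M => X * M * Y) '' Set.range A = Set.range A' ∨
              (fun M => X * M.transpose * Y) '' Set.range A = Set.range A') :
    ∃ F G H : (Fin n → K) ≃ₗ[K] (Fin n → K),
      (∀ w₁ w₂ : Fin n → K,
          Matrix.vecMul (F w₁) (A' (G w₂)) = H (Matrix.vecMul w₁ (A w₂))) ∨
      (∀ w₁ w₂ : Fin n → K,
          Matrix.vecMul (F w₁) (A' (G w₂)) = H (Matrix.vecMul w₁ (A w₂).transpose)) :=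
  equivalent_MRD_codes_give_isotopic_division_algebras_general hn A A' hrow hrow' hlin X Y hX hY
    hequiv
end

section
/- Let Q be a finite (right) quasifield, K a subfield of Ker Q with dim_K Q = n, and let C = {R(a) : a ∈ Q} ⊆ Mat_{n×n}(K) be the corresponding MRD code, where R(a) is the matrix of x ↦ x∘a with respect to a fixed K-basis and R(e) is the identity matrix. Suppose there exist X, Y ∈ GL(n,K) such that every matrix X R(a) Y (a ∈ Q) is symmetric. Then Z := Y X^{-t} is symmetric and invertible, and the K-bilinear form defined on Q (identified with row vectors K^n) by ⟨x, y⟩_Z := x Z y^t is a non-degenerate symmetric invariant form on Q, i.e. ⟨x∘a, y⟩_Z = ⟨x, y∘a⟩_Z for all a, x, y ∈ Q. -/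
namespace Matrix

section Inverse

variable {m K : Type*} [Fintype m] [DecidableEq m] [CommRing K]

theorem mul_mul_transpose_inv_of_isSymm {X M Y : Matrix m m K} (hX : IsUnit X)
    (h : (X * M * Y).IsSymm) : M * (Y * Xᵀ⁻¹) = (Y * Xᵀ⁻¹)ᵀ * Mᵀ := by
  have hXd : IsUnit X.det := (isUnit_iff_isUnit_det X).mp hX
  have hXtd : IsUnit Xᵀ.det := by rwa [det_transpose]
  calc M * (Y * Xᵀ⁻¹) = X⁻¹ * (X * M * Y) * Xᵀ⁻¹ := by
        simp only [Matrix.mul_assoc, nonsing_inv_mul_cancel_left _ _ hXd]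
    _ = X⁻¹ * (X * M * Y)ᵀ * Xᵀ⁻¹ := by rw [h.eq]
    _ = (Y * Xᵀ⁻¹)ᵀ * Mᵀ := by
        simp only [transpose_mul, transpose_nonsing_inv, transpose_transpose, Matrix.mul_assoc,
          mul_nonsing_inv _ hXtd, Matrix.mul_one]

theorem isSymm_mul_transpose_inv {X Y : Matrix m m K} (hX : IsUnit X) (h : (X * Y).IsSymm) :
    (Y * Xᵀ⁻¹).IsSymm := by
  have := mul_mul_transpose_inv_of_isSymm (M := 1) (Y := Y) hX (by rwa [Matrix.mul_one])
  rw [Matrix.one_mul, transpose_one, Matrix.mul_one] at this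
  exact this.symm

end Inverse

section DotProduct

variable {m K : Type*} [Fintype m] [CommSemiring K]

theorem vecMul_dotProduct_comm {Z : Matrix m m K} (hZ : Z.IsSymm) (u v : m → K) :
    u ᵥ* Z ⬝ᵥ v = v ᵥ* Z ⬝ᵥ u := by
  rw [← dotProduct_mulVec, ← vecMul_transpose, hZ.eq, dotProduct_comm]

theorem vecMul_vecMul_dotProduct_of_mul_eq {M Z : Matrix m m K} (h : M * Z = Z * Mᵀ)
    (u v : m → K) : u ᵥ* M ᵥ* Z ⬝ᵥ v = u ᵥ* Z ⬝ᵥ v ᵥ* M := by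
  rw [vecMul_vecMul, h, ← vecMul_vecMul, ← dotProduct_mulVec, mulVec_transpose]

end DotProduct

theorem eq_zero_of_forall_vecMul_dotProduct_eq_zero {m K : Type*} [Fintype m] [DecidableEq m]
    [CommRing K] {Z : Matrix m m K} (hZ : IsUnit Z) {u : m → K} (h : ∀ v, u ᵥ* Z ⬝ᵥ v = 0) :
    u = 0 :=
  vecMul_injective_of_isUnit hZ ((dotProduct_eq_zero _ h).trans (zero_vecMul Z).symm)

end Matrix

open Matrix

section RightMulMatrix

variable {Q m K : Type*} [Fintype m] [Semiring K] {mul : Q → Q → Q} {rep : Q → m → K}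
  {R : Q → Matrix m m K}

theorem rightMulMatrix_eq_one [DecidableEq m] {e : Q} (hR : ∀ x a, rep (mul x a) = rep x ᵥ* R a)
    (hrep : Function.Surjective rep) (he : ∀ x, mul x e = x) : R e = 1 :=
  ext_iff_vecMul.mpr fun v => by
    obtain ⟨x, rfl⟩ := hrep v
    rw [← hR, he, vecMul_one]

theorem rep_zero_of_mul_zero [Zero Q] (hR : ∀ x a, rep (mul x a) = rep x ᵥ* R a)
    (hrep : Function.Surjective rep) (h0 : ∀ x, mul x 0 = 0) : rep 0 = 0 := by
  obtain ⟨x, hx⟩ := hrep 0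
  rw [← h0 x, hR, hx, zero_vecMul]

end RightMulMatrix

theorem symmetric_equivalent_code_gives_invariant_form_general
    {Q : Type*} [AddCommGroup Q] (mul : Q → Q → Q) (e : Q)
    (hQ : IsQuasifield mul e)
    {K : Type*} [Field K] (ι : K → Q)
    {n : ℕ} (b : Fin n → Q) (rep : Q → Fin n → K)
    (hrep : ∀ x : Q, x = ∑ i, mul (ι (rep x i)) (b i))
    (hrep_unique : ∀ (x : Q) (c : Fin n → K), x = ∑ i, mul (ι (c i)) (b i) → c = rep x)
    (R : Q → Matrix (Fin n) (Fin n) K)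
    (hR : ∀ x a : Q, rep (mul x a) = Matrix.vecMul (rep x) (R a))
    (X Y : Matrix (Fin n) (Fin n) K) (hX : IsUnit X) (hY : IsUnit Y)
    (hsymm : ∀ a : Q, (X * R a * Y).IsSymm) :
    letI Z : Matrix (Fin n) (Fin n) K := Y * (X.transpose)⁻¹
    letI form : Q → Q → K :=
      fun x y => dotProduct (Matrix.vecMul (rep x) Z) (rep y)
    Z.IsSymm ∧ IsUnit Z ∧
      (∀ x y, form x y = form y x) ∧
      (∀ x, (∀ y, form x y = 0) → x = 0) ∧
      (∀ a x y, form (mul x a) y = form x (mul y a)) := by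
  have hrep_inj : Function.Injective rep := fun x y h => by rw [hrep x, hrep y, h]
  have hrep_surj : Function.Surjective rep := fun c => ⟨_, (hrep_unique _ c rfl).symm⟩
  have hRe : R e = 1 := rightMulMatrix_eq_one hR hrep_surj hQ.mul_one
  have hZ : (Y * Xᵀ⁻¹).IsSymm :=
    isSymm_mul_transpose_inv hX (by simpa only [hRe, Matrix.mul_one] using hsymm e)
  have hZu : IsUnit (Y * Xᵀ⁻¹) :=
    hY.mul (isUnit_nonsing_inv_iff.mpr ((isUnit_transpose X).mpr hX))
  have hcomm : ∀ a, R a * (Y * Xᵀ⁻¹) = Y * Xᵀ⁻¹ * (R a)ᵀ := fun a => by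
    simpa only [hZ.eq] using mul_mul_transpose_inv_of_isSymm hX (hsymm a)
  refine ⟨hZ, hZu, fun x y => vecMul_dotProduct_comm hZ _ _, fun x hx => ?_,
    fun a x y => ?_⟩
  · apply hrep_inj
    rw [rep_zero_of_mul_zero hR hrep_surj hQ.mul_zero]
    refine eq_zero_of_forall_vecMul_dotProduct_eq_zero hZu fun v => ?_
    obtain ⟨y, rfl⟩ := hrep_surj v
    exact hx y
  · simp only [hR]
    exact vecMul_vecMul_dotProduct_of_mul_eq (hcomm a) _ _

/-- Let `Q` be a finite quasifield, `K` a subfield of `Ker Q` with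
`dim_K Q = n`, and `C = {R a : a ∈ Q}` the corresponding MRD code, where `R a`
is the matrix of `x ↦ x ∘ a` in a fixed `K`-basis whose first vector is the
identity `e` (so `R e = 1`).  If there are `X, Y ∈ GL(n,K)` such that every
matrix `X (R a) Y` is symmetric, then `Z := Y X⁻ᵀ` is symmetric and
invertible, and `⟨x, y⟩_Z := (rep x) Z (rep y)ᵀ` is a non-degenerate symmetric
invariant `K`-bilinear form on `Q`, i.e.
`⟨x ∘ a, y⟩_Z = ⟨x, y ∘ a⟩_Z` for all `a, x, y ∈ Q`. -/
theorem symmetric_equivalent_code_gives_invariant_form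
    {Q : Type*} [AddCommGroup Q] [Fintype Q] (mul : Q → Q → Q) (e : Q)
    (hQ : IsQuasifield mul e)
    {K : Type*} [Field K] [Fintype K] (ι : K → Q)
    (hι_inj : Function.Injective ι)
    (hι_add : ∀ k k', ι (k + k') = ι k + ι k')
    (hι_mul : ∀ k k', ι (k * k') = mul (ι k) (ι k'))
    (hι_one : ι 1 = e)
    (hι_ker : ∀ k, ι k ∈ QKernel mul)
    {n : ℕ} (hn : 0 < n) (b : Fin n → Q) (rep : Q → Fin n → K)
    (hb0 : b ⟨0, hn⟩ = e)
    (hrep : ∀ x : Q, x = ∑ i, mul (ι (rep x i)) (b i))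
    (hrep_unique : ∀ (x : Q) (c : Fin n → K), x = ∑ i, mul (ι (c i)) (b i) → c = rep x)
    (R : Q → Matrix (Fin n) (Fin n) K)
    (hR : ∀ x a : Q, rep (mul x a) = Matrix.vecMul (rep x) (R a))
    (X Y : Matrix (Fin n) (Fin n) K) (hX : IsUnit X) (hY : IsUnit Y)
    (hsymm : ∀ a : Q, (X * R a * Y).IsSymm) :
    letI Z : Matrix (Fin n) (Fin n) K := Y * (X.transpose)⁻¹
    letI form : Q → Q → K :=
      fun x y => dotProduct (Matrix.vecMul (rep x) Z) (rep y)
    Z.IsSymm ∧ IsUnit Z ∧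
      (∀ x y, form x y = form y x) ∧
      (∀ x, (∀ y, form x y = 0) → x = 0) ∧
      (∀ a x y, form (mul x a) y = form x (mul y a)) :=
  symmetric_equivalent_code_gives_invariant_form_general mul e hQ ι b rep hrep hrep_unique R hR X Y
    hX hY hsymm
end

section
/- Let q be a prime power, n ≥ 1, E = F_{q^n}, K = F_q, and fix a K-basis x_1, …, x_n of E. For a ∈ E let G_a ∈ Mat_{n×n}(F_q) be the matrix with entries (G_a)_{ij} = Tr_{E/K}(a x_i x_j), where Tr_{E/K} is the field trace. Then: (1) each G_a is symmetric; (2) the map a ↦ G_a is K-linear and injective; (3) G_a − G_b = G_{a−b} is invertible for all a ≠ b in E. Hence {G_a : a ∈ E} is a symmetric F_q-linear MRD code in Mat_{n×n}(F_q) of size q^n with minimum distance n. -/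
/-!
Multiplication by `a ≠ 0` is a bijection of `E`, so the twisted trace form
`(y, z) ↦ Tr(a y z)` is as nondegenerate as the trace form itself, which is nondegenerate
because a finite extension of finite fields is separable. Its Gram matrix `Gₐ` in any basis
is therefore invertible, and `a ↦ Gₐ` is linear, so `Gₐ - G_b = G_{a-b}` is invertible
whenever `a ≠ b`.
-/

open Module
open LinearMap (BilinForm)

namespace Algebra

variable (K L : Type*) [Field K] [Field L] [Algebra K L]

noncomputable def mulTraceForm : L →ₗ[K] BilinForm K L where
  toFun a := (LinearMap.mul K L).compr₂ (traceForm K L a)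
  map_add' a b := by ext; simp
  map_smul' c a := by ext; simp

variable {K L}

@[simp]
theorem mulTraceForm_apply (a y z : L) : mulTraceForm K L a y z = trace K L (a * (y * z)) := rfl

theorem isSymm_mulTraceForm (a : L) : (mulTraceForm K L a).IsSymm :=
  ⟨fun y z => by simp [mul_comm y z]⟩

variable {ι : Type*} [Fintype ι] [DecidableEq ι] (b : Basis ι K L)

noncomputable def mulTraceMatrix : L →ₗ[K] Matrix ι ι K :=
  (LinearMap.BilinForm.toMatrix b).toLinearMap ∘ₗ mulTraceForm K L

theorem coe_mulTraceMatrix :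
    ⇑(mulTraceMatrix b) = fun a => Matrix.of fun i j => trace K L (a * b i * b j) := by
  ext a i j
  simp [mulTraceMatrix, LinearMap.BilinForm.toMatrix_apply, mul_assoc]

theorem isSymm_mulTraceMatrix (a : L) : (mulTraceMatrix b a).IsSymm :=
  (LinearMap.BilinForm.isSymm_toMatrix_iff_isSymm b).2 (isSymm_mulTraceForm a)

variable [FiniteDimensional K L] [Algebra.IsSeparable K L]

theorem mulTraceForm_nondegenerate {a : L} (ha : a ≠ 0) : (mulTraceForm K L a).Nondegenerate := by
  have hsymm := LinearMap.BilinForm.isSymm_iff.1 (isSymm_mulTraceForm (K := K) a)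
  refine hsymm.isRefl.nondegenerate_iff_separatingLeft.2 ?_
  intro y hy
  have hay : a * y = 0 :=
    (traceForm_nondegenerate K L).1 _ fun z => by simpa [mul_assoc] using hy z
  exact (mul_eq_zero.mp hay).resolve_left ha

theorem mulTraceForm_injective : Function.Injective (mulTraceForm K L) := by
  rw [injective_iff_map_eq_zero]
  intro a ha
  by_contra ha0
  exact (mulTraceForm_nondegenerate ha0).ne_zero ha

theorem isUnit_mulTraceMatrix {a : L} (ha : a ≠ 0) : IsUnit (mulTraceMatrix b a) := by
  rw [Matrix.isUnit_iff_isUnit_det, isUnit_iff_ne_zero]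
  exact (LinearMap.BilinForm.nondegenerate_iff_det_ne_zero b).1 (mulTraceForm_nondegenerate ha)

theorem mulTraceMatrix_injective : Function.Injective (mulTraceMatrix b) :=
  (LinearMap.BilinForm.toMatrix b).injective.comp mulTraceForm_injective

end Algebra

theorem trace_form_gives_symmetric_MRD_code_general
    {K E : Type*} [Field K] [Fintype K] [Field E] [Algebra K E]
    {n : ℕ} (x : Module.Basis (Fin n) K E) :
    letI Gmat : E → Matrix (Fin n) (Fin n) K :=
      fun a => Matrix.of fun i j => Algebra.trace K E (a * x i * x j)
    (∀ a : E, (Gmat a).IsSymm) ∧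
      (∀ a b : E, Gmat (a + b) = Gmat a + Gmat b) ∧
      (∀ (k : K) (a : E), Gmat (k • a) = k • Gmat a) ∧
      Function.Injective Gmat ∧
      (∀ a b : E, a ≠ b → IsUnit (Gmat a - Gmat b)) ∧
      (Set.range Gmat).ncard = Fintype.card K ^ n := by
  have : FiniteDimensional K E := Module.Finite.of_basis x
  rw [← Algebra.coe_mulTraceMatrix x]
  refine ⟨Algebra.isSymm_mulTraceMatrix x, map_add _, map_smul _,
    Algebra.mulTraceMatrix_injective x, fun a b hab => ?_, ?_⟩
  · rw [← map_sub]
    exact Algebra.isUnit_mulTraceMatrix x (sub_ne_zero.2 hab)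
  · rw [Set.ncard_range_of_injective (Algebra.mulTraceMatrix_injective x),
      Module.natCard_eq_pow_finrank (K := K), Module.finrank_eq_card_basis x, Fintype.card_fin,
      Nat.card_eq_fintype_card]

/-- Let `K = F_q` and `E = F_{q^n}` (`n ≥ 1`) with a fixed `K`-basis
`x₁, …, xₙ` of `E`, and for `a ∈ E` let `Gₐ` be the matrix with entries
`(Gₐ)ᵢⱼ = Tr_{E/K}(a xᵢ xⱼ)`.  Then each `Gₐ` is symmetric, the map `a ↦ Gₐ`
is `K`-linear and injective, and `Gₐ − G_b = G_{a−b}` is invertible for all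
`a ≠ b` in `E`.  Hence `{Gₐ : a ∈ E}` is a symmetric `F_q`-linear MRD code in
`Mat_{n×n}(F_q)` of size `q^n` with minimum distance `n`. -/
theorem trace_form_gives_symmetric_MRD_code
    {K E : Type*} [Field K] [Fintype K] [Field E] [Fintype E] [Algebra K E]
    {n : ℕ} (hn : 1 ≤ n) (x : Module.Basis (Fin n) K E) :
    letI Gmat : E → Matrix (Fin n) (Fin n) K :=
      fun a => Matrix.of fun i j => Algebra.trace K E (a * x i * x j)
    (∀ a : E, (Gmat a).IsSymm) ∧
      (∀ a b : E, Gmat (a + b) = Gmat a + Gmat b) ∧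
      (∀ (k : K) (a : E), Gmat (k • a) = k • Gmat a) ∧
      Function.Injective Gmat ∧
      (∀ a b : E, a ≠ b → IsUnit (Gmat a - Gmat b)) ∧
      (Set.range Gmat).ncard = Fintype.card K ^ n :=
  trace_form_gives_symmetric_MRD_code_general x
end
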